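/- arXiv:1507.02622 — 2 statements merged into one kernel-verified Lean document; each statement's English description precedes it below -/
import Mathlib

section
/- Let 1 < q < 2, λ > 0, Y > 0, C₁ = 1/(2(2√2λ)^{2−q}), C₂ = 1/2^{3−q}. Define G(ρ,μ) = C₁ρ² + Yρ² sin μ cos μ for 0 ≤ ρ ≤ √2 λ and G(ρ,μ) = C₂ρ^q + Yρ² sin μ cos μ for ρ ≥ √2 λ. If C₂/(Yλ^{2−q}) ≥ (q−1)^{(q−1)/2} q^{−q/2}, then G(ρ,μ) ≥ 0 for all ρ ≥ 0 and all μ such that the point (λ + ρ cos μ, λ + ρ sin μ) has both coordinates positive. -/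
/-!
Put `x = ρ cos μ`, `y = ρ sin μ`, so that the second term is `Y x y` and `x² + y² = ρ²`.
For `ρ ≤ √2 λ` it suffices that `2 |x y| ≤ ρ²` and that the hypothesis forces `Y ≤ 2 C₁`.
For `ρ > √2 λ` only `x y < 0` matters; then the negative coordinate lies in `(-λ, 0)`, whence
`x² y² ≤ λ² (ρ² - λ²)`. Bernoulli's inequality, in the form
`t - 1 ≤ (q - 1)^(q - 1) q^(-q) t^q` with `t = ρ² / λ²`, bounds this by `(C₂ ρ^q / Y)²`;
the same bound at `t = 2` is what gives `Y ≤ 2 C₁`.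
-/

open Real

namespace Real

variable {q : ℝ}

theorem sub_one_le_rpow_mul (hq : 1 < q) {t : ℝ} (ht : 0 ≤ t) :
    t - 1 ≤ (q - 1) ^ (q - 1) * q ^ (-q) * t ^ q := by
  have hq1 : 0 < q - 1 := by linarith
  have hq0 : 0 < q := by linarith
  -- `(q - 1)^(q - 1) q^(-q)` is the maximum of `(t - 1) / t^q`, attained at `t = q / (q - 1)`
  have hb := one_add_mul_self_le_rpow_one_add (s := (q - 1) / q * t - 1)
    (by have : 0 ≤ (q - 1) / q * t := by positivity
        linarith) hq.le
  have hl : 1 + q * ((q - 1) / q * t - 1) = (q - 1) * (t - 1) := by field_simp; ring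
  have hr : (1 + ((q - 1) / q * t - 1)) ^ q =
      (q - 1) * ((q - 1) ^ (q - 1) * q ^ (-q) * t ^ q) := by
    rw [add_sub_cancel, mul_rpow (by positivity) ht, div_rpow hq1.le hq0.le, rpow_neg hq0.le,
      rpow_sub_one hq1.ne']
    field_simp
  rw [hl, hr] at hb
  exact le_of_mul_le_mul_left hb hq1

theorem sq_sub_one_le (hq : 1 < q) {r : ℝ} (hr : 0 ≤ r) :
    r ^ 2 - 1 ≤ ((q - 1) ^ ((q - 1) / 2) * q ^ (-q / 2) * r ^ q) ^ 2 := by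
  have hsq : ∀ {x : ℝ}, 0 ≤ x → ∀ y : ℝ, (x ^ (y / 2)) ^ 2 = x ^ y := fun hx y => by
    rw [← rpow_mul_natCast hx]; norm_num
  rw [mul_pow, mul_pow, hsq (by linarith), hsq (by linarith), rpow_pow_comm hr]
  exact sub_one_le_rpow_mul hq (sq_nonneg r)

theorem mul_sq_sub_sq_le (hq : 1 < q) {lam ρ : ℝ} (hlam : 0 < lam) (hρ : 0 ≤ ρ) :
    lam ^ 2 * (ρ ^ 2 - lam ^ 2) ≤
      ((q - 1) ^ ((q - 1) / 2) * q ^ (-q / 2) * lam ^ (2 - q) * ρ ^ q) ^ 2 := by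
  obtain ⟨r, hr, rfl⟩ : ∃ r, 0 ≤ r ∧ ρ = lam * r := ⟨ρ / lam, by positivity, by field_simp⟩
  have hscale : lam ^ (2 - q) * (lam * r) ^ q = lam ^ 2 * r ^ q := by
    rw [mul_rpow hlam.le hr, ← mul_assoc, ← rpow_add hlam, sub_add_cancel, rpow_two]
  calc lam ^ 2 * ((lam * r) ^ 2 - lam ^ 2) = (lam ^ 2) ^ 2 * (r ^ 2 - 1) := by ring
    _ ≤ (lam ^ 2) ^ 2 * ((q - 1) ^ ((q - 1) / 2) * q ^ (-q / 2) * r ^ q) ^ 2 := by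
      gcongr; exact sq_sub_one_le hq hr
    _ = _ := by rw [mul_assoc _ (lam ^ (2 - q)), hscale]; ring

theorem one_le_mul_sqrt_two_rpow (hq : 1 < q) :
    1 ≤ (q - 1) ^ ((q - 1) / 2) * q ^ (-q / 2) * √2 ^ q := by
  have h := sq_sub_one_le hq (sqrt_nonneg 2)
  rw [sq_sqrt zero_le_two] at h
  have hpos : 0 ≤ (q - 1) ^ ((q - 1) / 2) * q ^ (-q / 2) * √2 ^ q := by
    have : 0 < q := by linarith
    positivity
  nlinarith

theorem two_mul_sqrt_two_rpow_mul (q : ℝ) : (2 * √2) ^ (2 - q) * √2 ^ q = 2 ^ (3 - q) := by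
  have h32 : 2 * √2 = 2 ^ (3 / 2 : ℝ) := by
    rw [sqrt_eq_rpow, show (3 / 2 : ℝ) = 1 + 1 / 2 by norm_num, rpow_add two_pos, rpow_one]
  rw [h32, sqrt_eq_rpow, ← rpow_mul zero_le_two, ← rpow_mul zero_le_two, ← rpow_add two_pos]
  ring_nf

end Real

theorem mul_two_sqrt_two_mul_rpow_le_one {q lam Y : ℝ} (hq : 1 < q) (hlam : 0 < lam)
    (hY : 0 ≤ Y)
    (h : (q - 1) ^ ((q - 1) / 2) * q ^ (-q / 2) * (Y * lam ^ (2 - q)) ≤ 1 / 2 ^ (3 - q)) :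
    Y * (2 * (√2 * lam)) ^ (2 - q) ≤ 1 := by
  have hg := one_le_mul_sqrt_two_rpow hq
  calc Y * (2 * (√2 * lam)) ^ (2 - q) = (2 * √2) ^ (2 - q) * (Y * lam ^ (2 - q)) := by
        rw [← mul_assoc, mul_rpow (by positivity) hlam.le]; ring
    _ ≤ (2 * √2) ^ (2 - q) *
        (√2 ^ q * ((q - 1) ^ ((q - 1) / 2) * q ^ (-q / 2) * (Y * lam ^ (2 - q)))) := by
      refine mul_le_mul_of_nonneg_left ?_ (by positivity)
      have hA : 0 ≤ Y * lam ^ (2 - q) := by positivity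
      nlinarith [mul_le_mul_of_nonneg_left hg hA]
    _ ≤ (2 * √2) ^ (2 - q) * (√2 ^ q * (1 / 2 ^ (3 - q))) := by gcongr
    _ = 1 := by
      rw [← mul_assoc, two_mul_sqrt_two_rpow_mul, mul_one_div_cancel]
      positivity

theorem sq_mul_sq_le_of_mul_neg {lam x y : ℝ} (hx : 0 < lam + x) (hy : 0 < lam + y)
    (hxy : x * y < 0) (hfar : 2 * lam ^ 2 ≤ x ^ 2 + y ^ 2) :
    x ^ 2 * y ^ 2 ≤ lam ^ 2 * (x ^ 2 + y ^ 2 - lam ^ 2) := by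
  suffices (x ^ 2 - lam ^ 2) * (y ^ 2 - lam ^ 2) ≤ 0 by linear_combination this
  rcases mul_neg_iff.mp hxy with ⟨-, hy0⟩ | ⟨hx0, -⟩
  · have : y ^ 2 < lam ^ 2 := by nlinarith
    exact mul_nonpos_of_nonneg_of_nonpos (by linarith) (by linarith)
  · have : x ^ 2 < lam ^ 2 := by nlinarith
    exact mul_nonpos_of_nonpos_of_nonneg (by linarith) (by linarith)

theorem mul_add_mul_nonneg_of_le_two_mul {a Y : ℝ} (hY : 0 ≤ Y) (h : Y ≤ 2 * a) (x y : ℝ) :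
    0 ≤ a * (x ^ 2 + y ^ 2) + Y * (x * y) := by
  nlinarith [mul_nonneg hY (sq_nonneg (x + y)),
    mul_nonneg (sub_nonneg.2 h) (add_nonneg (sq_nonneg x) (sq_nonneg y))]

theorem rpow_mul_add_mul_nonneg {q lam Y C x y ρ : ℝ} (hq : 1 < q) (hlam : 0 < lam)
    (hY : 0 ≤ Y)
    (hC : (q - 1) ^ ((q - 1) / 2) * q ^ (-q / 2) * (Y * lam ^ (2 - q)) ≤ C)
    (hx : 0 < lam + x) (hy : 0 < lam + y) (hρ : 0 ≤ ρ) (hxyρ : x ^ 2 + y ^ 2 = ρ ^ 2)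
    (hfar : 2 * lam ^ 2 ≤ ρ ^ 2) :
    0 ≤ C * ρ ^ q + Y * (x * y) := by
  have hg : 0 ≤ (q - 1) ^ ((q - 1) / 2) * q ^ (-q / 2) * (Y * lam ^ (2 - q)) := by
    have : 0 < q := by linarith
    positivity
  rcases le_or_gt 0 (x * y) with hxy | hxy
  · have : 0 ≤ C * ρ ^ q := mul_nonneg (hg.trans hC) (rpow_nonneg hρ q)
    nlinarith
  have hsq : (Y * (x * y)) ^ 2 ≤ (C * ρ ^ q) ^ 2 :=
    calc (Y * (x * y)) ^ 2 = Y ^ 2 * (x ^ 2 * y ^ 2) := by ring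
      _ ≤ Y ^ 2 * (lam ^ 2 * (ρ ^ 2 - lam ^ 2)) := by
        refine mul_le_mul_of_nonneg_left ?_ (sq_nonneg Y)
        simpa only [hxyρ] using sq_mul_sq_le_of_mul_neg hx hy hxy (hxyρ ▸ hfar)
      _ ≤ Y ^ 2 * ((q - 1) ^ ((q - 1) / 2) * q ^ (-q / 2) * lam ^ (2 - q) * ρ ^ q) ^ 2 := by
        gcongr; exact mul_sq_sub_sq_le hq hlam hρ
      _ = ((q - 1) ^ ((q - 1) / 2) * q ^ (-q / 2) * (Y * lam ^ (2 - q)) * ρ ^ q) ^ 2 := by ring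
      _ ≤ (C * ρ ^ q) ^ 2 := by gcongr
  linarith [(abs_le_of_sq_le_sq' hsq (mul_nonneg (hg.trans hC) (rpow_nonneg hρ q))).1]

theorem G_nonneg_on_positive_quadrant_general
    (q lam Y : ℝ) (hq1 : 1 < q) (hlam : 0 < lam) (hY : 0 < Y)
    (C1 C2 : ℝ)
    (hC1 : C1 = 1 / (2 * (2 * (Real.sqrt 2 * lam)) ^ (2 - q)))
    (hC2 : C2 = 1 / 2 ^ (3 - q))
    (hcond : C2 / (Y * lam ^ (2 - q)) ≥ (q - 1) ^ ((q - 1) / 2) * q ^ (-q / 2)) :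
    ∀ ρ μ : ℝ, 0 ≤ ρ →
      0 < lam + ρ * Real.cos μ → 0 < lam + ρ * Real.sin μ →
      (if ρ ≤ Real.sqrt 2 * lam then
          C1 * ρ ^ 2 + Y * ρ ^ 2 * Real.sin μ * Real.cos μ
        else
          C2 * ρ ^ q + Y * ρ ^ 2 * Real.sin μ * Real.cos μ) ≥ 0 := by
  have hC2Y : (q - 1) ^ ((q - 1) / 2) * q ^ (-q / 2) * (Y * lam ^ (2 - q)) ≤ C2 :=
    (le_div_iff₀ (by positivity)).1 hcond
  have hYC1 : Y ≤ 2 * C1 := by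
    rw [hC1, mul_one_div, div_mul_cancel_left₀ two_ne_zero, ← one_div,
      le_div_iff₀ (by positivity)]
    exact mul_two_sqrt_two_mul_rpow_le_one hq1 hlam hY.le (hC2 ▸ hC2Y)
  intro ρ μ hρ hx hy
  have hxyρ : (ρ * cos μ) ^ 2 + (ρ * sin μ) ^ 2 = ρ ^ 2 := by
    linear_combination ρ ^ 2 * cos_sq_add_sin_sq μ
  rw [show Y * ρ ^ 2 * sin μ * cos μ = Y * (ρ * cos μ * (ρ * sin μ)) by ring]
  split_ifs with hnear
  · rw [← hxyρ]
    exact (mul_add_mul_nonneg_of_le_two_mul hY.le hYC1 _ _).ge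
  · have hfar : 2 * lam ^ 2 ≤ ρ ^ 2 := by
      have := pow_le_pow_left₀ (by positivity) (not_le.1 hnear).le 2
      rwa [mul_pow, sq_sqrt zero_le_two] at this
    exact (rpow_mul_add_mul_nonneg hq1 hlam hY.le hC2Y hx hy hρ hxyρ hfar).ge

theorem G_nonneg_on_positive_quadrant
    (q lam Y : ℝ) (hq1 : 1 < q) (hq2 : q < 2) (hlam : 0 < lam) (hY : 0 < Y)
    (C1 C2 : ℝ)
    (hC1 : C1 = 1 / (2 * (2 * (Real.sqrt 2 * lam)) ^ (2 - q)))
    (hC2 : C2 = 1 / 2 ^ (3 - q))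
    (hcond : C2 / (Y * lam ^ (2 - q)) ≥ (q - 1) ^ ((q - 1) / 2) * q ^ (-q / 2)) :
    ∀ ρ μ : ℝ, 0 ≤ ρ →
      0 < lam + ρ * Real.cos μ → 0 < lam + ρ * Real.sin μ →
      (if ρ ≤ Real.sqrt 2 * lam then
          C1 * ρ ^ 2 + Y * ρ ^ 2 * Real.sin μ * Real.cos μ
        else
          C2 * ρ ^ q + Y * ρ ^ 2 * Real.sin μ * Real.cos μ) ≥ 0 :=
  G_nonneg_on_positive_quadrant_general q lam Y hq1 hlam hY C1 C2 hC1 hC2 hcond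
end

section
/- For 2 < q < 3, the supremum of 4|sin φ| |cos φ|^{q−2} |cos θ| |sin θ|^{q−1} over θ ∈ [0, π] and φ ∈ [π/2, 5π/4] equals 4(q−2)^{(q−2)/2} q^{−q/2}. -/
/-!
For `p > 0` and `a, b ≥ 0` with `a ^ 2 + b ^ 2 = 1`, the tangent-line bound `log t ≤ t - 1` applied
at `t = (p + 1) a ^ 2` and at `t = (p + 1) b ^ 2 / p`, weighted `1 : p`, gives
`a * b ^ p ≤ p ^ (p / 2) * (p + 1) ^ (-(p + 1) / 2)`, with equality when both values of `t` are `1`.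
The two factors `|sin φ| |cos φ| ^ (q - 2)` and `|cos θ| |sin θ| ^ (q - 1)` are of this form with
`p = q - 2` and `p = q - 1`, the maximisers can be chosen in the prescribed ranges of `φ` and `θ`,
and the factor `(q - 1) ^ (± (q - 1) / 2)` cancels in the product of the two maxima.
-/

open Real Set

noncomputable def maxMulRpow (p : ℝ) : ℝ := p ^ (p / 2) * (p + 1) ^ (-(p + 1) / 2)

lemma maxMulRpow_pos {p : ℝ} (hp : 0 < p) : 0 < maxMulRpow p := by
  unfold maxMulRpow; positivity

lemma log_maxMulRpow {p : ℝ} (hp : 0 < p) :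
    log (maxMulRpow p) = p / 2 * log p - (p + 1) / 2 * log (p + 1) := by
  rw [maxMulRpow, log_mul (by positivity) (by positivity), log_rpow hp, log_rpow (by linarith)]
  ring

lemma mul_rpow_le_maxMulRpow {p a b : ℝ} (hp : 0 < p) (ha : 0 ≤ a) (hb : 0 ≤ b)
    (hab : a ^ 2 + b ^ 2 = 1) : a * b ^ p ≤ maxMulRpow p := by
  have hM := maxMulRpow_pos hp
  rcases ha.eq_or_lt with rfl | ha
  · simpa using hM.le
  rcases hb.eq_or_lt with rfl | hb
  · simpa [zero_rpow hp.ne'] using hM.le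
  rw [← log_le_log_iff (by positivity) hM, log_mul ha.ne' (by positivity), log_rpow hb,
    log_maxMulRpow hp]
  have ha_tangent := log_le_sub_one_of_pos (by positivity : 0 < (p + 1) * a ^ 2)
  have hb_tangent := log_le_sub_one_of_pos (by positivity : 0 < (p + 1) / p * b ^ 2)
  rw [log_mul (by positivity) (by positivity), log_pow] at ha_tangent
  rw [log_mul (by positivity) (by positivity), log_div (by positivity) hp.ne', log_pow]
    at hb_tangent
  push_cast at ha_tangent hb_tangent
  have hb_weighted : p * (log (p + 1) - log p + 2 * log b) ≤ (p + 1) * b ^ 2 - p :=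
    calc _ ≤ p * ((p + 1) / p * b ^ 2 - 1) := by gcongr
      _ = (p + 1) * b ^ 2 - p := by field_simp
  linear_combination (ha_tangent + hb_weighted) / 2 + (p + 1) / 2 * hab

lemma exists_mul_rpow_eq_maxMulRpow {p : ℝ} (hp : 0 < p) :
    ∃ a b : ℝ, 0 ≤ a ∧ 0 ≤ b ∧ a ^ 2 + b ^ 2 = 1 ∧ a * b ^ p = maxMulRpow p := by
  refine ⟨√(1 / (p + 1)), √(p / (p + 1)), sqrt_nonneg _, sqrt_nonneg _, ?_, ?_⟩
  · rw [sq_sqrt (by positivity), sq_sqrt (by positivity)]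
    field_simp
    ring
  · have hL : 0 < √(1 / (p + 1)) * √(p / (p + 1)) ^ p := by positivity
    apply log_injOn_pos hL (maxMulRpow_pos hp)
    rw [log_mul (by positivity) (by positivity), log_rpow (by positivity), log_sqrt (by positivity),
      log_sqrt (by positivity), log_div one_ne_zero (by positivity),
      log_div hp.ne' (by positivity), log_one, log_maxMulRpow hp]
    ring

lemma maxMulRpow_mul_maxMulRpow_add_one {p : ℝ} (hp : 0 < p + 1) :
    maxMulRpow p * maxMulRpow (p + 1) = p ^ (p / 2) * (p + 1 + 1) ^ (-(p + 1 + 1) / 2) := by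
  have hcancel : (p + 1) ^ (-(p + 1) / 2) * (p + 1) ^ ((p + 1) / 2) = 1 := by
    rw [← rpow_add hp, neg_div, neg_add_cancel, rpow_zero]
  unfold maxMulRpow
  linear_combination (p ^ (p / 2) * (p + 1 + 1) ^ (-(p + 1 + 1) / 2)) * hcancel

lemma exists_mem_Icc_cos_sin_eq {a b : ℝ} (ha : 0 ≤ a) (hb : 0 ≤ b) (hab : a ^ 2 + b ^ 2 = 1) :
    ∃ θ ∈ Icc 0 (π / 2), cos θ = a ∧ sin θ = b := by
  refine ⟨arccos a, ⟨arccos_nonneg a, arccos_le_pi_div_two.2 ha⟩,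
    cos_arccos (by linarith) (by nlinarith), ?_⟩
  rw [sin_arccos, ← hab, add_sub_cancel_left, sqrt_sq hb]

lemma exists_abs_cos_mul_abs_sin_rpow_eq {p : ℝ} (hp : 0 < p) :
    ∃ θ ∈ Icc 0 π, |cos θ| * |sin θ| ^ p = maxMulRpow p := by
  obtain ⟨a, b, ha, hb, hab, hM⟩ := exists_mul_rpow_eq_maxMulRpow hp
  obtain ⟨θ, hθ, rfl, rfl⟩ := exists_mem_Icc_cos_sin_eq ha hb hab
  refine ⟨θ, ⟨hθ.1, hθ.2.trans (by linarith [pi_pos])⟩, ?_⟩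
  rwa [abs_of_nonneg ha, abs_of_nonneg hb]

lemma exists_abs_sin_mul_abs_cos_rpow_eq {p : ℝ} (hp : 0 < p) :
    ∃ φ ∈ Icc (π / 2) π, |sin φ| * |cos φ| ^ p = maxMulRpow p := by
  obtain ⟨a, b, ha, hb, hab, hM⟩ := exists_mul_rpow_eq_maxMulRpow hp
  obtain ⟨θ, hθ, rfl, rfl⟩ := exists_mem_Icc_cos_sin_eq hb ha (by linarith)
  refine ⟨π - θ, ⟨by linarith [hθ.2], by linarith [hθ.1]⟩, ?_⟩
  rwa [sin_pi_sub, cos_pi_sub, abs_neg, abs_of_nonneg ha, abs_of_nonneg hb]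

theorem sup_m1_eq_general
    (q : ℝ) (hq1 : 2 < q) :
    sSup {x : ℝ | ∃ θ ∈ Icc (0:ℝ) π, ∃ φ ∈ Icc (π / 2) (5 * π / 4),
        x = 4 * |Real.sin φ| * |Real.cos φ| ^ (q - 2) * |Real.cos θ|
              * |Real.sin θ| ^ (q - 1)}
      = 4 * (q - 2) ^ ((q - 2) / 2) * q ^ (-q / 2) := by
  have hp₂ : 0 < q - 2 := by linarith
  have hp₁ : 0 < q - 1 := by linarith
  have hM : 4 * (q - 2) ^ ((q - 2) / 2) * q ^ (-q / 2)
      = 4 * (maxMulRpow (q - 2) * maxMulRpow (q - 1)) := by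
    have := maxMulRpow_mul_maxMulRpow_add_one (p := q - 2) (by linarith)
    rw [show q - 2 + 1 = q - 1 by ring, show q - 1 + 1 = q by ring] at this
    rw [this, mul_assoc]
  rw [hM]
  refine IsGreatest.csSup_eq ⟨?_, ?_⟩
  · obtain ⟨θ, hθ, hθM⟩ := exists_abs_cos_mul_abs_sin_rpow_eq hp₁
    obtain ⟨φ, hφ, hφM⟩ := exists_abs_sin_mul_abs_cos_rpow_eq hp₂
    refine ⟨θ, hθ, φ, ⟨hφ.1, hφ.2.trans (by linarith [pi_pos])⟩, ?_⟩
    rw [← hθM, ← hφM]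
    ring
  · rintro x ⟨θ, -, φ, -, rfl⟩
    have hφ := mul_rpow_le_maxMulRpow hp₂ (abs_nonneg (sin φ)) (abs_nonneg (cos φ))
      (by rw [sq_abs, sq_abs, sin_sq_add_cos_sq])
    have hθ := mul_rpow_le_maxMulRpow hp₁ (abs_nonneg (cos θ)) (abs_nonneg (sin θ))
      (by rw [sq_abs, sq_abs, cos_sq_add_sin_sq])
    calc _ = 4 * ((|sin φ| * |cos φ| ^ (q - 2)) * (|cos θ| * |sin θ| ^ (q - 1))) := by ring
      _ ≤ 4 * (maxMulRpow (q - 2) * maxMulRpow (q - 1)) := by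
        gcongr
        exact (maxMulRpow_pos hp₂).le

theorem sup_m1_eq
    (q : ℝ) (hq1 : 2 < q) (hq2 : q < 3) :
    sSup {x : ℝ | ∃ θ ∈ Icc (0:ℝ) π, ∃ φ ∈ Icc (π / 2) (5 * π / 4),
        x = 4 * |Real.sin φ| * |Real.cos φ| ^ (q - 2) * |Real.cos θ|
              * |Real.sin θ| ^ (q - 1)}
      = 4 * (q - 2) ^ ((q - 2) / 2) * q ^ (-q / 2) :=
  sup_m1_eq_general q hq1
end
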